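/- arXiv:2603.03987 — 2 statements merged into one kernel-verified Lean document; each statement's English description precedes it below -/
import Mathlib

section
/- Let τ ∈ (0,1), δ > 0, η ∈ ℝ, and set ξ = (1−2τ)/(τ(1−τ)) and σ² = 2/(τ(1−τ)). Let z and w be independent real random variables on a probability space, with z standard normal and w exponentially distributed with rate δ². Then the random variable y† = η + ξ·w + σ·z·√(w/δ²) has the asymmetric Laplace distribution ALD(η, δ², τ); that is, the law of y† is absolutely continuous with respect to Lebesgue measure with density y ↦ τ(1−τ)δ² · exp(−δ² ρ_τ(y − η)). (Location-scale mixture representation of the ALD.) -/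
open MeasureTheory ProbabilityTheory Real

/-- The check (loss) function of quantile regression at level `τ`. -/
noncomputable def checkFun (τ v : ℝ) : ℝ := if 0 ≤ v then τ * |v| else (1 - τ) * |v|

/-!
Given `w = x > 0`, `y†` is normal with mean `η + ξ x` and variance `σ² x / δ²`, so the law of
`y†` has density `y ↦ ∫₀^∞ δ² e^{-δ² x} φ(y; η + ξ x, σ² x / δ²) dx`. Completing the square in
the exponent turns this into `∫₀^∞ x^{-1/2} e^{-(a x + b / x)} dx = √(π / a) e^{-2 √(a b)}`,
which the substitution `x = t²` reduces to `∫₀^∞ e^{-(c t - d / t)²} dt = √π / (2 c)`, an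
instance of the Cauchy–Schlömilch transformation. For the ALD parameters
`ξ² + 4 / (τ (1 - τ)) = (τ (1 - τ))⁻²`, and the mixture density becomes the ALD density.
-/

open Set
open scoped ENNReal NNReal

lemma image_Ioi_mul_sub_div {c d : ℝ} (hc : 0 < c) (hd : 0 < d) :
    (fun t => c * t - d / t) '' Ioi 0 = univ := by
  refine eq_univ_of_forall fun u => ?_
  set r := √(u ^ 2 + 4 * c * d)
  have hr : r ^ 2 = u ^ 2 + 4 * c * d := sq_sqrt (by positivity)
  have hur : 0 < u + r := by
    nlinarith [abs_lt_of_sq_lt_sq' (by nlinarith : u ^ 2 < r ^ 2) (sqrt_nonneg _)]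
  refine ⟨(u + r) / (2 * c), div_pos hur (by positivity), ?_⟩
  field_simp
  nlinarith

lemma strictMonoOn_mul_sub_div {c d : ℝ} (hc : 0 < c) (hd : 0 ≤ d) :
    StrictMonoOn (fun t => c * t - d / t) (Ioi 0) := fun x hx y _ hxy => by
  linarith [mul_lt_mul_of_pos_left hxy hc, div_le_div_of_nonneg_left hd hx hxy.le]

lemma lintegral_deriv_mul_comp_mul_sub_div_Ioi {c d : ℝ} (hc : 0 < c) (hd : 0 < d)
    (f : ℝ → ℝ≥0∞) :
    ∫⁻ t in Ioi 0, ENNReal.ofReal (c + d / t ^ 2) * f (c * t - d / t) = ∫⁻ u, f u := by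
  have hderiv : ∀ t ∈ Ioi (0 : ℝ),
      HasDerivWithinAt (fun t => c * t - d / t) (c + d / t ^ 2) (Ioi 0) t := fun t ht => by
    have := ((hasDerivAt_id t).const_mul c).sub ((hasDerivAt_inv (ne_of_gt ht)).const_mul d)
    exact (this.congr_deriv (by simp [div_eq_mul_inv])).hasDerivWithinAt
  have h := lintegral_image_eq_lintegral_abs_deriv_mul measurableSet_Ioi hderiv
    (strictMonoOn_mul_sub_div hc hd.le).injOn f
  rw [image_Ioi_mul_sub_div hc hd, Measure.restrict_univ] at h
  rw [h]
  refine setLIntegral_congr_fun measurableSet_Ioi fun t (ht : 0 < t) => ?_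
  rw [abs_of_pos (by positivity)]

/-- The substitution `t ↦ d / (c t)` is an involution of `(0, ∞)` reversing the sign of
`c t - d / t`. -/
lemma lintegral_comp_mul_sub_div_Ioi_of_even {c d : ℝ} (hc : 0 < c) (hd : 0 < d)
    {f : ℝ → ℝ≥0∞} (hf : ∀ u, f (-u) = f u) :
    ∫⁻ t in Ioi 0, f (c * t - d / t)
      = ∫⁻ t in Ioi 0, ENNReal.ofReal (d / (c * t ^ 2)) * f (c * t - d / t) := by
  set ψ : ℝ → ℝ := fun s => d / (c * s)
  have hψ' : ∀ s ∈ Ioi (0 : ℝ), HasDerivWithinAt ψ (-(d / (c * s ^ 2))) (Ioi 0) s :=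
    fun s hs => by
      have := (hasDerivAt_inv (ne_of_gt hs)).const_mul (d / c)
      refine (this.congr_deriv (by field_simp)).hasDerivWithinAt.congr (fun x _ => ?_) ?_ <;>
        simp only [ψ] <;> field_simp
  have hψ_anti : StrictAntiOn ψ (Ioi 0) := fun x (hx : 0 < x) y _ hxy =>
    div_lt_div_of_pos_left hd (by positivity) (mul_lt_mul_of_pos_left hxy hc)
  have hψ_image : ψ '' Ioi 0 = Ioi 0 := by
    refine (image_subset_iff.2 fun s (hs : 0 < s) => ?_).antisymm fun u (hu : 0 < u) => ?_
    · exact div_pos hd (by positivity)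
    · exact ⟨d / (c * u), div_pos hd (by positivity), by simp only [ψ]; field_simp⟩
  conv_lhs => rw [← hψ_image]
  rw [lintegral_image_eq_lintegral_abs_deriv_mul measurableSet_Ioi hψ' hψ_anti.injOn]
  refine setLIntegral_congr_fun measurableSet_Ioi fun s (hs : 0 < s) => ?_
  rw [abs_neg, abs_of_pos (by positivity), ← hf]
  congr 2
  simp only [ψ]
  field_simp
  ring

/-- The Cauchy–Schlömilch transformation. -/
lemma lintegral_comp_mul_sub_div_Ioi {c d : ℝ} (hc : 0 < c) (hd : 0 < d) {f : ℝ → ℝ≥0∞}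
    (hf_meas : Measurable f) (hf : ∀ u, f (-u) = f u) :
    ENNReal.ofReal (2 * c) * ∫⁻ t in Ioi 0, f (c * t - d / t) = ∫⁻ u, f u := by
  have hsplit : ∀ t ∈ Ioi (0 : ℝ), ENNReal.ofReal (c + d / t ^ 2) * f (c * t - d / t)
      = ENNReal.ofReal c *
          (f (c * t - d / t) + ENNReal.ofReal (d / (c * t ^ 2)) * f (c * t - d / t)) := by
    intro t (ht : 0 < t)
    rw [← one_add_mul, ← mul_assoc, ← ENNReal.ofReal_one,
      ← ENNReal.ofReal_add zero_le_one (by positivity), ← ENNReal.ofReal_mul hc.le]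
    congr 2
    field_simp
  rw [← lintegral_deriv_mul_comp_mul_sub_div_Ioi hc hd,
    setLIntegral_congr_fun measurableSet_Ioi hsplit,
    lintegral_const_mul' _ _ ENNReal.ofReal_ne_top, lintegral_add_left (by fun_prop),
    ← lintegral_comp_mul_sub_div_Ioi_of_even hc hd hf, ENNReal.ofReal_mul zero_le_two,
    ENNReal.ofReal_ofNat]
  ring

lemma lintegral_exp_neg_sq_sub_div_Ioi {c d : ℝ} (hc : 0 < c) (hd : 0 ≤ d) :
    ∫⁻ t in Ioi 0, ENNReal.ofReal (exp (-(c * t - d / t) ^ 2))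
      = ENNReal.ofReal (√π / (2 * c)) := by
  rcases hd.eq_or_lt with rfl | hd
  · have h := integral_gaussian_Ioi (c ^ 2)
    rw [sqrt_div' _ (sq_nonneg c), sqrt_sq hc.le] at h
    simp_rw [zero_div, sub_zero, mul_pow, ← neg_mul]
    rw [← ofReal_integral_eq_lintegral_ofReal
      (integrable_exp_neg_mul_sq (by positivity)).integrableOn
      (ae_of_all _ fun _ => (exp_pos _).le), h, div_div, mul_comm]
  have h2c : ENNReal.ofReal (2 * c) ≠ 0 := by simp [hc]
  rw [← ENNReal.mul_right_inj h2c ENNReal.ofReal_ne_top, ← ENNReal.ofReal_mul (by positivity),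
    mul_div_cancel₀ _ (by positivity),
    lintegral_comp_mul_sub_div_Ioi (f := fun u => ENNReal.ofReal (exp (-u ^ 2))) hc hd
      (by fun_prop) (by simp),
    ← ofReal_integral_eq_lintegral_ofReal (by simpa using integrable_exp_neg_mul_sq one_pos)
      (ae_of_all _ fun _ => (exp_pos _).le)]
  simpa using congrArg ENNReal.ofReal (integral_gaussian 1)

lemma lintegral_inv_sqrt_mul_exp_neg_add_div_Ioi {a b : ℝ} (ha : 0 < a) (hb : 0 ≤ b) :
    ∫⁻ x in Ioi 0, ENNReal.ofReal ((√x)⁻¹ * exp (-(a * x + b / x)))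
      = ENNReal.ofReal (√(π / a) * exp (-(2 * √(a * b)))) := by
  have hsq' : ∀ t ∈ Ioi (0 : ℝ), HasDerivWithinAt (fun t => t ^ 2) (2 * t) (Ioi 0) t :=
    fun t _ => by simpa using (hasDerivAt_pow 2 t).hasDerivWithinAt
  have hsq_inj : InjOn (fun t : ℝ => t ^ 2) (Ioi 0) :=
    ((pow_left_strictMonoOn₀ two_ne_zero).mono fun _ (ht : (0 : ℝ) < _) => ht.le).injOn
  have hsq_image : (fun t : ℝ => t ^ 2) '' Ioi 0 = Ioi 0 :=
    (image_subset_iff.2 fun t (ht : 0 < t) => pow_pos ht 2).antisymm fun x (hx : 0 < x) =>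
      ⟨√x, sqrt_pos.2 hx, sq_sqrt hx.le⟩
  have h := lintegral_image_eq_lintegral_abs_deriv_mul measurableSet_Ioi hsq' hsq_inj
    fun x => ENNReal.ofReal ((√x)⁻¹ * exp (-(a * x + b / x)))
  -- completing the square: `a t² + b / t² = (√a t - √b / t)² + 2 √(a b)`
  have hsquare : ∀ t ∈ Ioi (0 : ℝ),
      ENNReal.ofReal |2 * t| * ENNReal.ofReal ((√(t ^ 2))⁻¹ * exp (-(a * t ^ 2 + b / t ^ 2)))
        = ENNReal.ofReal (2 * exp (-(2 * √(a * b)))) *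
            ENNReal.ofReal (exp (-(√a * t - √b / t) ^ 2)) := by
    intro t (ht : 0 < t)
    rw [← ENNReal.ofReal_mul (abs_nonneg _), ← ENNReal.ofReal_mul (by positivity), sqrt_sq ht.le,
      abs_of_pos (by positivity), ← mul_assoc, mul_inv_cancel_right₀ ht.ne', mul_assoc,
      ← exp_add]
    congr 3
    rw [sqrt_mul ha.le]
    field_simp
    linear_combination t ^ 4 * sq_sqrt ha.le + sq_sqrt hb
  rw [hsq_image] at h
  rw [h, setLIntegral_congr_fun measurableSet_Ioi hsquare,
    lintegral_const_mul' _ _ ENNReal.ofReal_ne_top,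
    lintegral_exp_neg_sq_sub_div_Ioi (sqrt_pos.2 ha) (sqrt_nonneg b),
    ← ENNReal.ofReal_mul (by positivity), sqrt_div' _ ha.le]
  congr 1
  field_simp

lemma lintegral_exponential_mul_gaussianPDF_Ioi {r v : ℝ} (hr : 0 < r) (hv : 0 < v)
    (m β y : ℝ) :
    ∫⁻ x in Ioi 0, ENNReal.ofReal (r * exp (-(r * x))) * gaussianPDF (m + β * x) (v * x).toNNReal y
      = ENNReal.ofReal (r / √(β ^ 2 + 2 * r * v)
          * exp ((β * (y - m) - √(β ^ 2 + 2 * r * v) * |y - m|) / v)) := by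
  set κ := √(β ^ 2 + 2 * r * v)
  have hκ : 0 < κ := sqrt_pos.2 (by positivity)
  have hκ2 : κ ^ 2 = β ^ 2 + 2 * r * v := sq_sqrt (by positivity)
  have hsquare : ∀ x ∈ Ioi (0 : ℝ),
      ENNReal.ofReal (r * exp (-(r * x))) * gaussianPDF (m + β * x) (v * x).toNNReal y
        = ENNReal.ofReal (r / √(2 * π * v) * exp (β * (y - m) / v)) *
          ENNReal.ofReal ((√x)⁻¹ * exp (-(κ ^ 2 / (2 * v) * x + (y - m) ^ 2 / (2 * v) / x))) := by
    intro x (hx : 0 < x)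
    rw [gaussianPDF, gaussianPDFReal, Real.coe_toNNReal _ (by positivity),
      ← ENNReal.ofReal_mul (by positivity), ← ENNReal.ofReal_mul (by positivity)]
    congr 1
    calc r * exp (-(r * x)) *
          ((√(2 * π * (v * x)))⁻¹ * exp (-(y - (m + β * x)) ^ 2 / (2 * (v * x))))
        = r / √(2 * π * v) * (√x)⁻¹ *
            exp (-(r * x) + -(y - (m + β * x)) ^ 2 / (2 * (v * x))) := by
          rw [exp_add, ← mul_assoc, show 2 * π * (v * x) = 2 * π * v * x by ring,
            sqrt_mul (by positivity) x]
          field_simp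
      _ = r / √(2 * π * v) * (√x)⁻¹ *
            exp (β * (y - m) / v + -(κ ^ 2 / (2 * v) * x + (y - m) ^ 2 / (2 * v) / x)) := by
          congr 2; rw [hκ2]; field_simp; ring
      _ = _ := by rw [exp_add]; ring
  have hab : κ ^ 2 / (2 * v) * ((y - m) ^ 2 / (2 * v)) = (κ * |y - m| / (2 * v)) ^ 2 := by
    rw [div_pow, mul_pow, sq_abs]; ring
  have hpa : π / (κ ^ 2 / (2 * v)) = (√π * √(2 * v) / κ) ^ 2 := by
    rw [div_pow, mul_pow, sq_sqrt pi_pos.le, sq_sqrt (by positivity)]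
    field_simp
    rw [sq_sqrt (by positivity)]
  rw [setLIntegral_congr_fun measurableSet_Ioi hsquare,
    lintegral_const_mul' _ _ ENNReal.ofReal_ne_top,
    lintegral_inv_sqrt_mul_exp_neg_add_div_Ioi (by positivity) (by positivity),
    ← ENNReal.ofReal_mul (by positivity), hab, hpa, sqrt_sq (by positivity),
    sqrt_sq (by positivity), mul_mul_mul_comm, ← exp_add,
    show β * (y - m) / v + -(2 * (κ * |y - m| / (2 * v))) = (β * (y - m) - κ * |y - m|) / v by
      field_simp; ring,
    mul_assoc 2 π, sqrt_mul zero_le_two, sqrt_mul zero_le_two, sqrt_mul pi_pos.le]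
  field_simp

lemma gaussianReal_map_const_add_mul {μ : ℝ} {v : ℝ≥0} (b c : ℝ) :
    (gaussianReal μ v).map (fun t => b + c * t)
      = gaussianReal (c * μ + b) (.mk (c ^ 2) (sq_nonneg c) * v) := by
  rw [show (fun t => b + c * t) = (b + ·) ∘ (c * ·) from rfl,
    ← Measure.map_map (by fun_prop) (by fun_prop), gaussianReal_map_const_mul,
    gaussianReal_map_const_add]

lemma expMeasure_eq_withDensity_Ioi (r : ℝ) :
    expMeasure r
      = (volume.restrict (Ioi 0)).withDensity fun x => ENNReal.ofReal (r * exp (-(r * x))) := by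
  rw [show expMeasure r = volume.withDensity (exponentialPDF r) from rfl,
    Measure.restrict_congr_set Ioi_ae_eq_Ici, ← withDensity_indicator measurableSet_Ici]
  congr with x
  by_cases hx : 0 ≤ x
  · rw [exponentialPDF_of_nonneg hx, indicator_of_mem (mem_Ici.2 hx)]
  · rw [exponentialPDF_of_neg (not_le.1 hx), indicator_of_notMem (mt mem_Ici.1 hx)]

theorem MeasureTheory.Measure.map_prod_eq_withDensity_lintegral {α β γ : Type*}
    [MeasurableSpace α] [MeasurableSpace β] [MeasurableSpace γ]
    {μ : Measure α} {ν : Measure β} {ρ : Measure γ} [SFinite μ] [SFinite ν] [SFinite ρ]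
    {F : α × β → γ} (hF : Measurable F) {k : α → γ → ℝ≥0∞}
    (hk : Measurable (Function.uncurry k))
    (hk_law : ∀ᵐ x ∂μ, ν.map (fun y => F (x, y)) = ρ.withDensity (k x)) :
    (μ.prod ν).map F = ρ.withDensity fun z => ∫⁻ x, k x z ∂μ := by
  ext s hs
  rw [Measure.map_apply hF hs, Measure.prod_apply (hF hs), withDensity_apply _ hs,
    ← lintegral_lintegral_swap hk.aemeasurable]
  refine lintegral_congr_ae (hk_law.mono fun x hx => ?_)
  dsimp only
  rw [← withDensity_apply _ hs, ← hx, Measure.map_apply (by fun_prop) hs]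
  rfl

theorem map_prod_expMeasure_gaussianReal {r v : ℝ} (hr : 0 < r) (hv : 0 < v) (m β : ℝ) :
    ((expMeasure r).prod (gaussianReal 0 1)).map (fun p => m + β * p.1 + √(v * p.1) * p.2)
      = volume.withDensity fun y => ENNReal.ofReal (r / √(β ^ 2 + 2 * r * v)
          * exp ((β * (y - m) - √(β ^ 2 + 2 * r * v) * |y - m|) / v)) := by
  have := isProbabilityMeasure_expMeasure hr
  have hk : Measurable (Function.uncurry fun x => gaussianPDF (m + β * x) (v * x).toNNReal) := by
    have : Measurable fun p : ℝ × ℝ => (m + β * p.1, (v * p.1).toNNReal, p.2) := by fun_prop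
    exact measurable_uncurry_gaussianPDF.comp this
  rw [Measure.map_prod_eq_withDensity_lintegral (ρ := volume) (by fun_prop) hk]
  · congr with y
    rw [expMeasure_eq_withDensity_Ioi,
      lintegral_withDensity_eq_lintegral_mul _ (by fun_prop) (by fun_prop)]
    exact lintegral_exponential_mul_gaussianPDF_Ioi hr hv m β y
  rw [expMeasure_eq_withDensity_Ioi]
  filter_upwards [(withDensity_absolutelyContinuous _ _).ae_le (ae_restrict_mem measurableSet_Ioi)]
    with x (hx : 0 < x)
  rw [gaussianReal_map_const_add_mul, ← gaussianReal_of_var_ne_zero]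
  · congr 1
    · ring
    · ext
      simp only [NNReal.coe_mk, mul_one, Real.coe_toNNReal _ (by positivity : 0 ≤ v * x),
        sq_sqrt (by positivity : 0 ≤ v * x)]
  · exact (Real.toNNReal_pos.2 (by positivity)).ne'

lemma checkFun_eq_abs_sub_mul_div_two (τ u : ℝ) :
    checkFun τ u = (|u| - (1 - 2 * τ) * u) / 2 := by
  rcases le_or_gt 0 u with hu | hu
  · rw [checkFun, if_pos hu, abs_of_nonneg hu]; ring
  · rw [checkFun, if_neg hu.not_ge, abs_of_neg hu]; ring

/-- **Location-scale mixture representation of the ALD.**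
If `z` is standard normal, `w` is exponential with rate `δ²`, and `z, w` are independent,
then `y† = η + ξ·w + σ·z·√(w/δ²)` (with `ξ = (1−2τ)/(τ(1−τ))` and `σ² = 2/(τ(1−τ))`)
has the asymmetric Laplace distribution `ALD(η, δ², τ)`, i.e. its law has Lebesgue
density `y ↦ τ(1−τ)δ² exp(−δ² ρ_τ(y − η))`. -/
theorem ald_location_scale_mixture
    {Ω : Type*} [MeasurableSpace Ω] (P : Measure Ω) [IsProbabilityMeasure P]
    (τ δ η ξ σ : ℝ) (hτ : τ ∈ Set.Ioo (0 : ℝ) 1) (hδ : 0 < δ)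
    (hξ : ξ = (1 - 2 * τ) / (τ * (1 - τ))) (hσ : σ = Real.sqrt (2 / (τ * (1 - τ))))
    (z w : Ω → ℝ) (hz : Measurable z) (hw : Measurable w)
    (hindep : IndepFun z w P)
    (hzlaw : Measure.map z P = gaussianReal 0 1)
    (hwlaw : Measure.map w P = expMeasure (δ ^ 2)) :
    Measure.map (fun ω => η + ξ * w ω + σ * z ω * Real.sqrt (w ω / δ ^ 2)) P
      = volume.withDensity
          (fun y => ENNReal.ofReal (τ * (1 - τ) * δ ^ 2
            * Real.exp (-(δ ^ 2) * checkFun τ (y - η)))) := by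
  obtain ⟨hτ0, hτ1⟩ := hτ
  have hq : 0 < τ * (1 - τ) := mul_pos hτ0 (by linarith)
  have hlaw : P.map (fun ω => (w ω, z ω)) = (expMeasure (δ ^ 2)).prod (gaussianReal 0 1) := by
    rw [← hwlaw, ← hzlaw]
    exact hindep.symm.map_prod_eq_prod_map_map hw.aemeasurable hz.aemeasurable
  have hy : (fun ω => η + ξ * w ω + σ * z ω * √(w ω / δ ^ 2))
      = (fun p : ℝ × ℝ => η + ξ * p.1 + √(2 / (τ * (1 - τ) * δ ^ 2) * p.1) * p.2) ∘
          fun ω => (w ω, z ω) := by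
    funext ω
    rw [Function.comp_apply, hσ, mul_right_comm, ← sqrt_mul (by positivity)]
    field_simp
  have hκ : √(ξ ^ 2 + 2 * δ ^ 2 * (2 / (τ * (1 - τ) * δ ^ 2))) = 1 / (τ * (1 - τ)) := by
    rw [← sqrt_sq (by positivity : 0 ≤ 1 / (τ * (1 - τ))), hξ]
    congr 1
    field_simp
    ring
  rw [hy, ← Measure.map_map (by fun_prop) (by fun_prop), hlaw,
    map_prod_expMeasure_gaussianReal (by positivity) (by positivity), hκ]
  congr with y
  rw [checkFun_eq_abs_sub_mul_div_two, hξ]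
  field_simp
  congr 3
  ring
end

section
/- Let τ ∈ (0,1), δ > 0, η ∈ ℝ, ξ = (1−2τ)/(τ(1−τ)) and σ = √(2/(τ(1−τ))). For every y ∈ ℝ, ∫₀^∞ (δ/(σ√(2πw))) · exp(−δ²(y − η − ξw)²/(2σ²w)) · δ² e^{−δ²w} dw = τ(1−τ)δ² · exp(−δ² ρ_τ(y − η)); i.e., the Lebesgue integral over w ∈ (0,∞) of the normal density with mean η + ξw and variance wσ²/δ², evaluated at y, weighted by the exponential density with rate δ², equals the asymmetric Laplace density at y. -/
/-!
With `a = δ √(τ(1-τ)) |y - η| / 2` and `b = δ / (2 √(τ(1-τ)))`, the integrand is a constant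
multiple of `w^(-1/2) exp(-a²/w - b²w)`, whose integral over `(0, ∞)` is `√π / b · exp(-2ab)`
(the normalising constant of a generalised inverse Gaussian law). After `w = u²` this integral
is `2 exp(-2ab) ∫₀^∞ exp(-(bu - a/u)²) du`, and the Cauchy–Schlömilch substitution
`v = bu - a/u`, together with the symmetry `u ↦ (a/b)/u`, evaluates the last integral as
`√π / (2b)`.
-/

open MeasureTheory Real

open Set

theorem hasDerivAt_const_div {c x : ℝ} (hx : x ≠ 0) :
    HasDerivAt (fun x => c / x) (-(c / x ^ 2)) x := by
  simpa [div_eq_mul_inv] using (hasDerivAt_inv hx).const_mul c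

theorem bijOn_const_div_Ioi {c : ℝ} (hc : 0 < c) : BijOn (fun x => c / x) (Ioi 0) (Ioi 0) :=
  InvOn.bijOn ⟨fun _ _ => div_div_cancel₀ hc.ne', fun _ _ => div_div_cancel₀ hc.ne'⟩
    (fun _ hx => div_pos hc hx) (fun _ hx => div_pos hc hx)

theorem integral_comp_const_div_Ioi {E : Type*} [NormedAddCommGroup E] [NormedSpace ℝ E]
    (g : ℝ → E) {c : ℝ} (hc : 0 < c) :
    ∫ x in Ioi 0, (c / x ^ 2) • g (c / x) = ∫ x in Ioi 0, g x := by
  have := integral_image_eq_integral_abs_deriv_smul measurableSet_Ioi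
    (fun x hx => (hasDerivAt_const_div (c := c) (ne_of_gt hx)).hasDerivWithinAt)
    (bijOn_const_div_Ioi hc).injOn g
  rw [(bijOn_const_div_Ioi hc).image_eq] at this
  rw [this]
  refine setIntegral_congr_fun measurableSet_Ioi fun x hx => ?_
  rw [abs_neg, abs_of_pos (div_pos hc (pow_pos hx 2))]

section CauchySchlomilch

variable {a b : ℝ}

theorem hasDerivAt_mul_sub_div {u : ℝ} (hu : u ≠ 0) :
    HasDerivAt (fun u => b * u - a / u) (b + a / u ^ 2) u :=
  (((hasDerivAt_id' u).const_mul b).sub (hasDerivAt_const_div hu)).congr_deriv (by ring)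

theorem strictMonoOn_mul_sub_div_s1 (ha : 0 ≤ a) (hb : 0 < b) :
    StrictMonoOn (fun u => b * u - a / u) (Ioi 0) := fun x hx y _ hxy => by
  have : a / y ≤ a / x := div_le_div_of_nonneg_left ha hx hxy.le
  have : b * x < b * y := mul_lt_mul_of_pos_left hxy hb
  dsimp only
  linarith

theorem image_mul_sub_div_Ioi (ha : 0 < a) (hb : 0 < b) :
    (fun u => b * u - a / u) '' Ioi 0 = univ := by
  refine eq_univ_of_forall fun v => ?_
  obtain ⟨D, hD0, hD⟩ : ∃ D, 0 ≤ D ∧ D ^ 2 = v ^ 2 + 4 * a * b :=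
    ⟨_, sqrt_nonneg _, sq_sqrt (by positivity)⟩
  have hvD : 0 < v + D := by nlinarith
  refine ⟨(v + D) / (2 * b), div_pos hvD (by positivity), ?_⟩
  field_simp
  linear_combination hD

theorem integral_exp_neg_sq_mul_sub_div_Ioi (ha : 0 ≤ a) (hb : 0 < b) :
    ∫ u in Ioi 0, exp (-(b * u - a / u) ^ 2) = √π / (2 * b) := by
  rcases ha.eq_or_lt with rfl | ha
  · have hgauss (u : ℝ) : exp (-(b * u - 0 / u) ^ 2) = exp (-(b ^ 2) * u ^ 2) := by ring_nf
    simp_rw [hgauss, integral_gaussian_Ioi, sqrt_div' _ (sq_nonneg b), sqrt_sq hb.le]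
    ring
  set φ : ℝ → ℝ := fun u => b * u - a / u
  set φ' : ℝ → ℝ := fun u => b + a / u ^ 2
  have hφ' (u : ℝ) (hu : u ∈ Ioi 0) : HasDerivWithinAt φ (φ' u) (Ioi 0) u :=
    (hasDerivAt_mul_sub_div (ne_of_gt hu)).hasDerivWithinAt
  have hφ_inj : InjOn φ (Ioi 0) := (strictMonoOn_mul_sub_div_s1 ha.le hb).injOn
  have habs : EqOn (fun u => |φ' u| • exp (-φ u ^ 2)) (fun u => φ' u * exp (-φ u ^ 2)) (Ioi 0) :=
    fun u _ => by
      have : 0 < φ' u := by positivity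
      simp only [abs_of_pos this, smul_eq_mul]
  have hint : IntegrableOn (fun u => φ' u * exp (-φ u ^ 2)) (Ioi 0) := by
    have := (integrableOn_image_iff_integrableOn_abs_deriv_smul measurableSet_Ioi hφ' hφ_inj
      fun v => exp (-v ^ 2)).mp (by simpa using (integrable_exp_neg_mul_sq one_pos).integrableOn)
    exact (integrableOn_congr_fun habs measurableSet_Ioi).mp this
  have hsum : ∫ u in Ioi 0, φ' u * exp (-φ u ^ 2) = √π := by
    have := integral_image_eq_integral_abs_deriv_smul measurableSet_Ioi hφ' hφ_inj
      fun v => exp (-v ^ 2)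
    rw [image_mul_sub_div_Ioi ha hb, Measure.restrict_univ,
      setIntegral_congr_fun measurableSet_Ioi habs] at this
    rw [← this]
    simpa using integral_gaussian 1
  have hK : IntegrableOn (fun u => b * exp (-φ u ^ 2)) (Ioi 0) := by
    refine hint.mono' (by fun_prop) (ae_restrict_of_forall_mem measurableSet_Ioi fun u _ => ?_)
    have : 0 ≤ a / u ^ 2 * exp (-φ u ^ 2) := by positivity
    rw [norm_of_nonneg (by positivity)]
    linarith
  -- `u ↦ (a / b) / u` reverses the sign of `φ`, turning the `b`-part of `φ'` into its `a`-part
  have hflip : ∫ u in Ioi 0, a / u ^ 2 * exp (-φ u ^ 2) = ∫ u in Ioi 0, b * exp (-φ u ^ 2) := by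
    rw [← integral_comp_const_div_Ioi _ (div_pos ha hb)]
    refine setIntegral_congr_fun measurableSet_Ioi fun u (hu : 0 < u) => ?_
    have : φ (a / b / u) ^ 2 = φ u ^ 2 := by
      simp only [φ]
      field_simp
      ring
    rw [smul_eq_mul, this]
    field_simp
  have hsplit : ∫ u in Ioi 0, a / u ^ 2 * exp (-φ u ^ 2)
      = (∫ u in Ioi 0, φ' u * exp (-φ u ^ 2)) - ∫ u in Ioi 0, b * exp (-φ u ^ 2) := by
    rw [← integral_sub hint hK]
    congr with u
    simp only [φ']
    ring
  rw [hflip, hsum, integral_const_mul] at hsplit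
  change ∫ u in Ioi 0, exp (-φ u ^ 2) = _
  rw [eq_div_iff (by positivity)]
  linarith

end CauchySchlomilch

theorem integral_inv_sqrt_mul_exp_neg_div_sub_mul_Ioi {a b : ℝ} (ha : 0 ≤ a) (hb : 0 < b) :
    ∫ w in Ioi 0, (√w)⁻¹ * exp (-(a ^ 2 / w) - b ^ 2 * w) = √π / b * exp (-(2 * a * b)) := by
  rw [← integral_comp_rpow_Ioi_of_pos
    (g := fun w => (√w)⁻¹ * exp (-(a ^ 2 / w) - b ^ 2 * w)) two_pos]
  calc ∫ u in Ioi 0, (2 * u ^ ((2 : ℝ) - 1)) • ((√(u ^ (2 : ℝ)))⁻¹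
        * exp (-(a ^ 2 / u ^ (2 : ℝ)) - b ^ 2 * u ^ (2 : ℝ)))
      = ∫ u in Ioi 0, 2 * exp (-(2 * a * b)) * exp (-(b * u - a / u) ^ 2) := by
        refine setIntegral_congr_fun measurableSet_Ioi fun u (hu : 0 < u) => ?_
        have hexp : -(a ^ 2 / u ^ 2) - b ^ 2 * u ^ 2 = -(2 * a * b) + -(b * u - a / u) ^ 2 := by
          field_simp
          ring
        rw [show (2 : ℝ) - 1 = 1 by norm_num, rpow_one, rpow_two, sqrt_sq hu.le, hexp, exp_add,
          smul_eq_mul]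
        field_simp
    _ = √π / b * exp (-(2 * a * b)) := by
        rw [integral_const_mul, integral_exp_neg_sq_mul_sub_div_Ioi ha hb]
        field_simp

theorem checkFun_eq (τ v : ℝ) : checkFun τ v = (|v| + (2 * τ - 1) * v) / 2 := by
  unfold checkFun
  split_ifs with hv
  · rw [abs_of_nonneg hv]; ring
  · rw [abs_of_neg (not_le.mp hv)]; ring

theorem normal_mul_exponential_density_eq {τ δ ξ σ s d w : ℝ} (hτ : τ ∈ Ioo (0 : ℝ) 1)
    (hξ : ξ = (1 - 2 * τ) / (τ * (1 - τ))) (hσ : σ = √(2 / (τ * (1 - τ))))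
    (hs : 0 < s) (hs2 : s ^ 2 = τ * (1 - τ)) (hw : 0 < w) :
    δ / (σ * √(2 * π * w)) * exp (-(δ ^ 2 * (d - ξ * w) ^ 2) / (2 * σ ^ 2 * w))
        * (δ ^ 2 * exp (-(δ ^ 2) * w))
      = δ ^ 3 * s / (2 * √π) * exp (δ ^ 2 * (1 - 2 * τ) * d / 2)
        * ((√w)⁻¹ * exp (-((δ * s * |d| / 2) ^ 2 / w) - (δ / (2 * s)) ^ 2 * w)) := by
  obtain ⟨hτ0, hτ1⟩ := hτ
  have hσ' : σ = √2 / s := by rw [hσ, ← hs2, sqrt_div' _ (sq_nonneg s), sqrt_sq hs.le]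
  have hσ2 : σ ^ 2 = 2 / (τ * (1 - τ)) := by rw [hσ, sq_sqrt (by positivity)]
  have hroot : √(2 * π * w) = √2 * √π * √w := by
    rw [sqrt_mul (by positivity), sqrt_mul zero_le_two]
  have hexp : -(δ ^ 2 * (d - ξ * w) ^ 2) / (2 * σ ^ 2 * w) + -(δ ^ 2) * w
      = δ ^ 2 * (1 - 2 * τ) * d / 2 + (-((δ * s * |d| / 2) ^ 2 / w) - (δ / (2 * s)) ^ 2 * w) := by
    rw [hξ, hσ2, div_pow, mul_pow, mul_pow, hs2, sq_abs]
    have : 1 - τ ≠ 0 := by linarith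
    field_simp
    linear_combination -(δ ^ 2 * w ^ 2) * hs2
  calc _ = δ ^ 3 / (σ * √(2 * π * w)) * exp (-(δ ^ 2 * (d - ξ * w) ^ 2) / (2 * σ ^ 2 * w)
          + -(δ ^ 2) * w) := by rw [exp_add]; ring
    _ = _ := by
      rw [hexp, exp_add, hσ', hroot]
      field_simp
      rw [sq_sqrt zero_le_two]

/-- Marginalizing the exponential mixing variable in the location-scale mixture
representation of the ALD: the integral over `w ∈ (0,∞)` of the normal density with mean
`η + ξw` and variance `wσ²/δ²` at `y`, weighted by the exponential density with rate `δ²`,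
equals the asymmetric Laplace density at `y`. -/
theorem ald_mixture_integral
    (τ δ η ξ σ : ℝ) (hτ : τ ∈ Set.Ioo (0 : ℝ) 1) (hδ : 0 < δ)
    (hξ : ξ = (1 - 2 * τ) / (τ * (1 - τ))) (hσ : σ = Real.sqrt (2 / (τ * (1 - τ))))
    (y : ℝ) :
    ∫ w in Set.Ioi (0 : ℝ),
        (δ / (σ * Real.sqrt (2 * Real.pi * w)))
          * Real.exp (-(δ ^ 2 * (y - η - ξ * w) ^ 2) / (2 * σ ^ 2 * w))
          * (δ ^ 2 * Real.exp (-(δ ^ 2) * w))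
      = τ * (1 - τ) * δ ^ 2 * Real.exp (-(δ ^ 2) * checkFun τ (y - η)) := by
  have ht : 0 < τ * (1 - τ) := mul_pos hτ.1 (sub_pos.mpr hτ.2)
  obtain ⟨s, hs, hs2⟩ : ∃ s, 0 < s ∧ s ^ 2 = τ * (1 - τ) := ⟨_, sqrt_pos.mpr ht, sq_sqrt ht.le⟩
  rw [setIntegral_congr_fun measurableSet_Ioi
      fun w hw => normal_mul_exponential_density_eq (d := y - η) hτ hξ hσ hs hs2 hw,
    integral_const_mul,
    integral_inv_sqrt_mul_exp_neg_div_sub_mul_Ioi (by positivity) (by positivity), checkFun_eq, ← hs2]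
  calc _ = δ ^ 2 * s ^ 2 * exp (δ ^ 2 * (1 - 2 * τ) * (y - η) / 2
        + -(2 * (δ * s * |y - η| / 2) * (δ / (2 * s)))) := by
        rw [exp_add]
        field_simp
    _ = _ := by
      congr 1
      · ring
      · congr 1
        field_simp
        ring
end
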